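/- arXiv:1608.03170 — 2 statements merged into one kernel-verified Lean document; each statement's English description precedes it below -/
import Mathlib

section
/- Let H be a real Hilbert space, {H_k} a nested increasing sequence of closed subspaces with closure H_∞ := closure of ∪_k H_k. Let a_k, a_∞ be bilinear forms on H that are uniformly bounded and uniformly coercive with constants independent of k, and let f ∈ H*. Suppose w_k ∈ H_k satisfies a_k(w_k, v) = f(v) for all v ∈ H_k, w_∞ ∈ H_∞ satisfies a_∞(w_∞, v) = f(v) for all v ∈ H_∞, and |a_k(w,v) − a_∞(w,v)| ≤ ε_k‖w‖‖v‖ for all w, v ∈ H with ε_k → 0. Then any weak limit point of {w_k} in H equals w_∞. -/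
open Filter
open scoped RealInnerProductSpace

/-- Abstract Galerkin convergence on nested subspaces:
with uniformly bounded, uniformly coercive bilinear forms `a_k` converging to
`a_∞`, Galerkin solutions `w_k ∈ H_k`, and limiting solution `w_∞ ∈ H_∞ :=
closure (⋃ H_k)`, any weak limit point of `{w_k}` equals `w_∞`. -/
theorem weak_limit_point_is_limiting_galerkin_solution
    {H : Type*} [NormedAddCommGroup H] [InnerProductSpace ℝ H] [CompleteSpace H]
    (Hk : ℕ → Submodule ℝ H) (hnested : ∀ k, Hk k ≤ Hk (k + 1))
    (hclosed : ∀ k, IsClosed (Hk k : Set H))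
    (Hinf : Set H) (hHinf : Hinf = closure (⋃ k, (Hk k : Set H)))
    (ak : ℕ → H →ₗ[ℝ] H →ₗ[ℝ] ℝ) (ainf : H →ₗ[ℝ] H →ₗ[ℝ] ℝ)
    (C c : ℝ) (hC : 0 < C) (hc : 0 < c)
    (hbdd : ∀ k x y, |ak k x y| ≤ C * ‖x‖ * ‖y‖)
    (hbddinf : ∀ x y, |ainf x y| ≤ C * ‖x‖ * ‖y‖)
    (hcoer : ∀ k x, c * ‖x‖ ^ 2 ≤ ak k x x)
    (hcoerinf : ∀ x, c * ‖x‖ ^ 2 ≤ ainf x x)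
    (f : H →L[ℝ] ℝ)
    (wk : ℕ → H) (hwk : ∀ k, wk k ∈ Hk k)
    (hgal : ∀ k, ∀ v ∈ Hk k, ak k (wk k) v = f v)
    (winf : H) (hwinf : winf ∈ Hinf)
    (hgalinf : ∀ v ∈ Hinf, ainf winf v = f v)
    (ε : ℕ → ℝ) (hε : Tendsto ε atTop (nhds 0))
    (hconsist : ∀ k (w v : H), |ak k w v - ainf w v| ≤ ε k * ‖w‖ * ‖v‖)
    (w : H) (φ : ℕ → ℕ) (hφ : StrictMono φ)
    (hweak : ∀ y : H, Tendsto (fun n => ⟪wk (φ n), y⟫) atTop (nhds ⟪w, y⟫)) :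
    w = winf := by
  have hmono : Monotone Hk := monotone_nat_of_le_succ hnested
  set U : Submodule ℝ H := (⨆ k, Hk k).topologicalClosure with hUdef
  have hUclosed : IsClosed (U : Set H) := Submodule.isClosed_topologicalClosure _
  haveI : CompleteSpace U := hUclosed.completeSpace_coe
  -- Hinf = U as sets
  have hcoe : ((⨆ k, Hk k : Submodule ℝ H) : Set H) = ⋃ k, (Hk k : Set H) :=
    Submodule.coe_iSup_of_directed Hk (hmono.directed_le)
  have hHinfU : Hinf = (U : Set H) := by
    rw [hHinf, hUdef, Submodule.topologicalClosure_coe, hcoe]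
  have hkU : ∀ k, Hk k ≤ U := fun k =>
    le_trans (le_iSup Hk k) (Submodule.le_topologicalClosure _)
  -- boundedness of wk
  set M : ℝ := ‖f‖ / c with hM
  have hwkbdd : ∀ k, ‖wk k‖ ≤ M := by
    intro k
    have h1 : c * ‖wk k‖ ^ 2 ≤ ak k (wk k) (wk k) := hcoer k _
    have h2 : ak k (wk k) (wk k) = f (wk k) := hgal k _ (hwk k)
    have h3 : f (wk k) ≤ ‖f‖ * ‖wk k‖ := le_trans (le_abs_self _) (f.le_opNorm _)
    have h4 : c * ‖wk k‖ ^ 2 ≤ ‖f‖ * ‖wk k‖ := by rw [← h2] at h3; linarith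
    rw [hM, le_div_iff₀ hc]
    rcases (norm_nonneg (wk k)).eq_or_lt with h0 | h0
    · rw [← h0]; simp
    · nlinarith
  have hφle : ∀ n, n ≤ φ n := fun n => hφ.le_apply
  have hεφ : Tendsto (fun n => ε (φ n)) atTop (nhds 0) := hε.comp hφ.tendsto_atTop
  -- key: ainf w v = f v for v in any Hk m
  have hkey : ∀ m, ∀ v ∈ Hk m, ainf w v = f v := by
    intro m v hv
    -- continuous functional x ↦ ainf x v
    set g : H →L[ℝ] ℝ := LinearMap.mkContinuous (ainf.flip v) (C * ‖v‖)
      (fun x => by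
        rw [Real.norm_eq_abs]
        calc |ainf.flip v x| = |ainf x v| := rfl
          _ ≤ C * ‖x‖ * ‖v‖ := hbddinf x v
          _ = C * ‖v‖ * ‖x‖ := by ring) with hg
    have hgapp : ∀ x, g x = ainf x v := fun x => rfl
    set z : H := (InnerProductSpace.toDual ℝ H).symm g with hz
    have hzapp : ∀ x, ⟪x, z⟫ = g x := by
      intro x
      rw [real_inner_comm]
      have : (InnerProductSpace.toDual ℝ H) z = g := (InnerProductSpace.toDual ℝ H).apply_symm_apply g
      rw [← this]
      rfl
    -- weak convergence of the functional
    have h1 : Tendsto (fun n => ainf (wk (φ n)) v) atTop (nhds (ainf w v)) := by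
      have := hweak z
      simp only [hzapp, hgapp] at this
      exact this
    -- convergence to f v
    have h2 : Tendsto (fun n => ainf (wk (φ n)) v) atTop (nhds (f v)) := by
      have hdiff : Tendsto (fun n => ainf (wk (φ n)) v - f v) atTop (nhds 0) := by
        apply squeeze_zero_norm' (a := fun n => |ε (φ n)| * M * ‖v‖)
        · filter_upwards [eventually_ge_atTop m] with n hn
          have hvn : v ∈ Hk (φ n) := hmono (le_trans hn (hφle n)) hv
          have heq : ak (φ n) (wk (φ n)) v = f v := hgal (φ n) v hvn
          have hcons := hconsist (φ n) (wk (φ n)) v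
          rw [heq] at hcons
          rw [Real.norm_eq_abs, abs_sub_comm]
          refine le_trans hcons ?_
          have hwn := hwkbdd (φ n)
          nlinarith [mul_nonneg (mul_nonneg (sub_nonneg.mpr (le_abs_self (ε (φ n))))
              (norm_nonneg (wk (φ n)))) (norm_nonneg v),
            mul_nonneg (mul_nonneg (abs_nonneg (ε (φ n))) (sub_nonneg.mpr hwn)) (norm_nonneg v)]
        · have : Tendsto (fun n => |ε (φ n)| * M * ‖v‖) atTop (nhds (|(0:ℝ)| * M * ‖v‖)) :=
            ((hεφ.abs).mul_const M).mul_const ‖v‖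
          simpa using this
      have h2' := hdiff.add (tendsto_const_nhds (x := f v) (f := atTop))
      simp only [sub_add_cancel, zero_add] at h2'
      exact h2'
    exact tendsto_nhds_unique h1 h2
  -- ainf w v = f v for all v ∈ U (continuity)
  have hkeyU : ∀ v ∈ U, ainf w v = f v := by
    set g : H →L[ℝ] ℝ := LinearMap.mkContinuous (ainf w) (C * ‖w‖)
      (fun x => by
        rw [Real.norm_eq_abs]
        calc |ainf w x| ≤ C * ‖w‖ * ‖x‖ := hbddinf w x
          _ = C * ‖w‖ * ‖x‖ := rfl) with hg
    have : Set.EqOn (⇑g) (⇑f) (closure (⋃ k, (Hk k : Set H))) := by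
      apply Set.EqOn.closure
      · intro x hx
        rcases Set.mem_iUnion.mp hx with ⟨m, hm⟩
        exact hkey m x hm
      · exact g.continuous
      · exact f.continuous
    intro v hv
    have hv' : v ∈ closure (⋃ k, (Hk k : Set H)) := by
      rw [← hHinf, hHinfU]; exact hv
    exact this hv'
  -- w ∈ U via orthogonal projection
  have hwU : w ∈ U := by
    set p : H := (U.orthogonalProjectionOnto w : H) with hp
    set q : H := w - p with hq
    have hqorth : q ∈ Uᗮ := U.sub_starProjection_mem_orthogonal w
    have hzero : ∀ n, ⟪wk (φ n), q⟫ = 0 := fun n =>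
      (Submodule.mem_orthogonal U q).mp hqorth _ (hkU (φ n) (hwk (φ n)))
    have h1 : Tendsto (fun n => ⟪wk (φ n), q⟫) atTop (nhds ⟪w, q⟫) := hweak q
    have h2 : ⟪w, q⟫ = 0 := by
      have h0 : Tendsto (fun n => ⟪wk (φ n), q⟫) atTop (nhds 0) := by
        simp only [hzero]; exact tendsto_const_nhds
      exact tendsto_nhds_unique h1 h0
    have hpq : ⟪p, q⟫ = 0 :=
      (Submodule.mem_orthogonal U q).mp hqorth _ (U.orthogonalProjectionOnto w).2
    have hq0 : ⟪q, q⟫ = 0 := by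
      have hsplit : ⟪w, q⟫ = ⟪p, q⟫ + ⟪q, q⟫ := by
        have hw' : w = p + q := by rw [hq]; abel
        rw [hw', inner_add_left]
      rw [hpq] at hsplit
      linarith
    have hq00 : q = 0 := inner_self_eq_zero.mp hq0
    have hwp : w = p := by
      have := sub_eq_zero.mp (hq ▸ hq00)
      exact this
    rw [hwp, hp]
    exact (U.orthogonalProjectionOnto w).2
  -- conclude
  have hwinfU : winf ∈ U := by rw [hHinfU] at hwinf; exact hwinf
  have hu : w - winf ∈ U := U.sub_mem hwU hwinfU
  have e1 : ainf w (w - winf) = f (w - winf) := hkeyU _ hu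
  have e2 : ainf winf (w - winf) = f (w - winf) := hgalinf _ (by rw [hHinfU]; exact hu)
  have e3 : ainf (w - winf) (w - winf) = 0 := by
    have hsub : (ainf (w - winf)) (w - winf)
        = ainf w (w - winf) - ainf winf (w - winf) := by
      have h' : ainf (w - winf) = ainf w - ainf winf := map_sub ainf w winf
      rw [h', LinearMap.sub_apply]
    rw [hsub, e1, e2, sub_self]
  have e4 := hcoerinf (w - winf)
  rw [e3] at e4
  have e5 : ‖w - winf‖ ^ 2 = 0 :=
    le_antisymm (by nlinarith) (by positivity)
  have e6 : ‖w - winf‖ = 0 := by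
    have := pow_eq_zero_iff (n := 2) (by norm_num) |>.mp e5
    exact this
  exact sub_eq_zero.mp (norm_eq_zero.mp e6)
end

section
/- Let σ_n → σ* a.e. in Ω with λ ≤ σ_n, σ* ≤ λ^{-1} a.e., u_n ⇀ u weakly in H^1(Ω), and suppose (σ_n ∇u_n, ∇u_n)_{L²(Ω)} → (σ* ∇u, ∇u)_{L²(Ω)}. Then ‖∇(u_n − u)‖_{L²(Ω)} → 0, i.e., ∇u_n → ∇u strongly in L²(Ω). -/
open MeasureTheory Filter
open scoped RealInnerProductSpace

noncomputable section

abbrev Euc (d : ℕ) := EuclideanSpace ℝ (Fin d)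

/-- Weak convergence in `H¹(Ω)` (tested against all `w ∈ H¹(Ω)` via the
`H¹` inner product), together with the uniform `H¹` bound it entails. -/
def WeakH1Tendsto {d : ℕ} (μ : Measure (Euc d)) (un : ℕ → Euc d → ℝ) (u : Euc d → ℝ) : Prop :=
  (∃ C : ℝ, ∀ n, (∫ x, (un n x) ^ 2 ∂μ) + (∫ x, ‖gradient (un n) x‖ ^ 2 ∂μ) ≤ C) ∧
  ∀ w : Euc d → ℝ, MemLp w 2 μ → MemLp (fun x => gradient w x) 2 μ →
    Tendsto (fun n => ∫ x, (un n x * w x + ⟪gradient (un n) x, gradient w x⟫) ∂μ) atTop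
      (nhds (∫ x, (u x * w x + ⟪gradient u x, gradient w x⟫) ∂μ))

/-!
Expanding the square,
`∫ σₙ |∇uₙ - ∇u|² = (σₙ∇uₙ, ∇uₙ) - 2 (∇uₙ, σₙ∇u) + (∇u, σₙ∇u)`.
By dominated convergence `σₙ∇u → σ*∇u` strongly in `L²`, while `∇uₙ ⇀ ∇u` weakly in `L²`; so
both inner products on the right tend to `(σ*∇u, ∇u)`, which is also the limit of the energies.
Hence the left side tends to `0`, and `σₙ ≥ λ` gives the claim.

The weak convergence of `∇uₙ` against arbitrary fields, not only gradients, comes from the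
embedding `w ↦ (w, ∇w)` into `L² × L²`: the sequence and its limit lie in the span of the
tested vectors, and the orthogonal complement of that span pairs to zero with all of them.
-/

open Topology
open scoped InnerProductSpace ENNReal

section Hilbert

variable {𝕜 H ι : Type*} [RCLike 𝕜] [NormedAddCommGroup H] [InnerProductSpace 𝕜 H]
  {l : Filter ι} {f : ι → H} {g : H}

theorem isClosed_setOf_tendsto_inner {M : ℝ} (hM : ∀ i, ‖f i‖ ≤ M) :
    IsClosed {h : H | Tendsto (fun i => ⟪f i, h⟫_𝕜) l (𝓝 ⟪g, h⟫_𝕜)} := by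
  have hbdd : ∃ C, ∀ i, ‖innerSL 𝕜 (f i)‖ ≤ C :=
    ⟨M, fun i => (innerSL_apply_norm 𝕜 (f i)).trans_le (hM i)⟩
  have hequi : Equicontinuous fun i => ⇑(innerSL 𝕜 (f i)) :=
    ((NormedSpace.equicontinuous_TFAE fun i => innerSL 𝕜 (f i)).out 5 1).1 hbdd
  exact hequi.isClosed_setOfPred_tendsto (innerSL 𝕜 g).continuous

theorem tendsto_inner_span {S : Set H}
    (hS : ∀ s ∈ S, Tendsto (fun i => ⟪f i, s⟫_𝕜) l (𝓝 ⟪g, s⟫_𝕜)) {h : H}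
    (hh : h ∈ Submodule.span 𝕜 S) : Tendsto (fun i => ⟪f i, h⟫_𝕜) l (𝓝 ⟪g, h⟫_𝕜) := by
  induction hh using Submodule.span_induction with
  | mem s hs => exact hS s hs
  | zero => simpa using tendsto_const_nhds
  | add x y _ _ hx hy => simpa only [inner_add_right] using hx.add hy
  | smul a x _ hx => simpa only [inner_smul_right] using hx.const_mul a

theorem tendsto_inner_of_forall_mem_span [CompleteSpace H] {S : Set H} {M : ℝ}
    (hM : ∀ i, ‖f i‖ ≤ M) (hf : ∀ i, f i ∈ Submodule.span 𝕜 S) (hg : g ∈ Submodule.span 𝕜 S)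
    (hS : ∀ s ∈ S, Tendsto (fun i => ⟪f i, s⟫_𝕜) l (𝓝 ⟪g, s⟫_𝕜)) (h : H) :
    Tendsto (fun i => ⟪f i, h⟫_𝕜) l (𝓝 ⟪g, h⟫_𝕜) := by
  set K := (Submodule.span 𝕜 S).topologicalClosure
  have hK : ∀ k ∈ K, Tendsto (fun i => ⟪f i, k⟫_𝕜) l (𝓝 ⟪g, k⟫_𝕜) := fun k hk =>
    closure_minimal (fun _ => tendsto_inner_span hS) (isClosed_setOf_tendsto_inner hM)
      (by rwa [← SetLike.mem_coe, Submodule.topologicalClosure_coe] at hk)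
  have hproj : ∀ v ∈ K, ⟪v, h⟫_𝕜 = ⟪v, K.starProjection h⟫_𝕜 := fun v hv => by
    rw [← K.inner_starProjection_left_eq_right, K.starProjection_eq_self_iff.2 hv]
  have hfK : ∀ i, f i ∈ K := fun i => Submodule.le_topologicalClosure _ (hf i)
  rw [hproj g (Submodule.le_topologicalClosure _ hg)]
  simpa only [hproj _ (hfK _)] using hK _ (K.starProjection_apply_mem h)

theorem tendsto_inner_of_weak_of_tendsto {x : ι → H} {x₀ : H} {y : ι → H} {y₀ : H} {M : ℝ}
    (hM : ∀ i, ‖x i‖ ≤ M) (hx : ∀ h, Tendsto (fun i => ⟪x i, h⟫_𝕜) l (𝓝 ⟪x₀, h⟫_𝕜))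
    (hy : Tendsto y l (𝓝 y₀)) : Tendsto (fun i => ⟪x i, y i⟫_𝕜) l (𝓝 ⟪x₀, y₀⟫_𝕜) := by
  have hsmall : Tendsto (fun i => ⟪x i, y i - y₀⟫_𝕜) l (𝓝 0) := by
    refine squeeze_zero_norm (fun i => (norm_inner_le_norm _ _).trans ?_)
      (by simpa using (tendsto_iff_norm_sub_tendsto_zero.1 hy).const_mul M)
    exact mul_le_mul_of_nonneg_right (hM i) (norm_nonneg _)
  simpa [inner_sub_right] using (hx y₀).add hsmall

end Hilbert

namespace MeasureTheory

variable {α E : Type*} {m : MeasurableSpace α} {μ : Measure α}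
  [NormedAddCommGroup E] [InnerProductSpace ℝ E]

theorem MemLp.inner_toLp_toLp {f g : α → E} (hf : MemLp f 2 μ) (hg : MemLp g 2 μ) :
    ⟪hf.toLp f, hg.toLp g⟫ = ∫ x, ⟪f x, g x⟫ ∂μ := by
  rw [L2.inner_def]
  refine integral_congr_ae ?_
  filter_upwards [hf.coeFn_toLp, hg.coeFn_toLp] with x hfx hgx
  rw [hfx, hgx]

theorem MemLp.integrable_inner {f g : α → E} (hf : MemLp f 2 μ) (hg : MemLp g 2 μ) :
    Integrable (fun x => ⟪f x, g x⟫) μ := by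
  refine (L2.integrable_inner (𝕜 := ℝ) (hf.toLp f) (hg.toLp g)).congr ?_
  filter_upwards [hf.coeFn_toLp, hg.coeFn_toLp] with x hfx hgx
  rw [hfx, hgx]

theorem MemLp.norm_toLp_sq {f : α → E} (hf : MemLp f 2 μ) :
    ‖hf.toLp f‖ ^ 2 = ∫ x, ‖f x‖ ^ 2 ∂μ := by
  simp_rw [← real_inner_self_eq_norm_sq, hf.inner_toLp_toLp]

theorem tendsto_toLp_of_dominated {F : ℕ → α → E} {F₀ : α → E} {g : α → ℝ}
    (hF : ∀ n, MemLp (F n) 2 μ) (hF₀ : MemLp F₀ 2 μ) (hg : MemLp g 2 μ)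
    (hbound : ∀ n, ∀ᵐ x ∂μ, ‖F n x‖ ≤ g x)
    (hlim : ∀ᵐ x ∂μ, Tendsto (fun n => F n x) atTop (𝓝 (F₀ x))) :
    Tendsto (fun n => (hF n).toLp (F n)) atTop (𝓝 (hF₀.toLp F₀)) := by
  have hbound₀ : ∀ᵐ x ∂μ, ‖F₀ x‖ ≤ g x := by
    filter_upwards [hlim, ae_all_iff.2 hbound] with x hx hxg
    exact le_of_tendsto' hx.norm hxg
  have hsq : Tendsto (fun n => ∫ x, ‖F n x - F₀ x‖ ^ 2 ∂μ) atTop (𝓝 0) := by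
    rw [← integral_zero]
    refine tendsto_integral_of_dominated_convergence (fun x => (2 * g x) ^ 2)
      (fun n => ((hF n).1.sub hF₀.1).norm.pow 2) (hg.const_mul 2).integrable_sq
      (fun n => ?_) ?_
    · filter_upwards [hbound n, hbound₀] with x hn h₀
      rw [norm_pow, norm_norm]
      gcongr
      linarith [norm_sub_le (F n x) (F₀ x)]
    · filter_upwards [hlim] with x hx
      simpa using ((hx.sub_const (F₀ x)).norm.pow 2)
  rw [tendsto_iff_norm_sub_tendsto_zero]
  simp_rw [← MemLp.toLp_sub]
  refine (Real.sqrt_zero ▸ hsq.sqrt).congr fun n => ?_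
  rw [← Real.sqrt_sq (norm_nonneg _), MemLp.norm_toLp_sq]
  rfl

theorem tendsto_toLp_smul {c : ℕ → α → ℝ} {c₀ : α → ℝ} {G : α → E} {C : ℝ}
    (hc : ∀ n, MemLp (c n) ∞ μ) (hc₀ : MemLp c₀ ∞ μ) (hG : MemLp G 2 μ)
    (hbound : ∀ n, ∀ᵐ x ∂μ, ‖c n x‖ ≤ C)
    (hlim : ∀ᵐ x ∂μ, Tendsto (fun n => c n x) atTop (𝓝 (c₀ x))) :
    Tendsto (fun n => (hG.smul (r := 2) (hc n)).toLp (c n • G)) atTop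
      (𝓝 ((hG.smul (r := 2) hc₀).toLp (c₀ • G))) := by
  refine tendsto_toLp_of_dominated _ _ (hG.norm.const_mul C) (fun n => ?_) ?_
  · filter_upwards [hbound n] with x hx
    rw [Pi.smul_apply', norm_smul]
    exact mul_le_mul_of_nonneg_right hx (norm_nonneg _)
  · filter_upwards [hlim] with x hx
    exact hx.smul_const _

theorem integral_mul_norm_sub_sq {σ : α → ℝ} {F G : α → E} (hσ : MemLp σ ∞ μ)
    (hF : MemLp F 2 μ) (hG : MemLp G 2 μ) :
    ∫ x, σ x * ‖F x - G x‖ ^ 2 ∂μ = ∫ x, σ x * ⟪F x, F x⟫ ∂μ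
      - 2 * ⟪hF.toLp F, (hG.smul hσ).toLp (σ • G)⟫ + ⟪hG.toLp G, (hG.smul hσ).toLp (σ • G)⟫ := by
  have hσG : MemLp (σ • G) 2 μ := hG.smul hσ
  have hpt : ∀ x, σ x * ‖F x - G x‖ ^ 2
      = σ x * ⟪F x, F x⟫ - 2 * ⟪F x, (σ • G) x⟫ + ⟪G x, (σ • G) x⟫ := fun x => by
    rw [← real_inner_self_eq_norm_sq, real_inner_sub_sub_self, Pi.smul_apply',
      real_inner_smul_right, real_inner_smul_right, real_inner_comm (G x)]
    ring
  simp_rw [hpt, MemLp.inner_toLp_toLp]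
  have hFF : Integrable (fun x => σ x * ⟪F x, F x⟫) μ :=
    (hF.integrable_inner hF).mul_of_top_right hσ
  have hFσG := (hF.integrable_inner hσG).const_mul 2
  rw [integral_add _ (hG.integrable_inner hσG), integral_sub hFF hFσG, integral_const_mul]
  exact hFF.sub hFσG

theorem integral_le_inv_mul_integral_mul {σ f : α → ℝ} {c : ℝ} (hc : 0 < c) (hσ : MemLp σ ∞ μ)
    (hσc : ∀ᵐ x ∂μ, c ≤ σ x) (hf : Integrable f μ) (hf₀ : 0 ≤ᵐ[μ] f) :
    ∫ x, f x ∂μ ≤ c⁻¹ * ∫ x, σ x * f x ∂μ := by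
  rw [le_inv_mul_iff₀ hc, ← integral_const_mul]
  refine integral_mono_ae (hf.const_mul c) (hf.mul_of_top_right hσ) ?_
  filter_upwards [hσc, hf₀] with x hx hfx
  exact mul_le_mul_of_nonneg_right hx hfx

theorem tendsto_integral_of_tendsto_integral_mul {ι : Type*} {l : Filter ι} {σ f : ι → α → ℝ}
    {c : ℝ} (hc : 0 < c) (hσ : ∀ i, MemLp (σ i) ∞ μ) (hσc : ∀ i, ∀ᵐ x ∂μ, c ≤ σ i x)
    (hf : ∀ i, Integrable (f i) μ) (hf₀ : ∀ i, 0 ≤ᵐ[μ] f i)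
    (h : Tendsto (fun i => ∫ x, σ i x * f i x ∂μ) l (𝓝 0)) :
    Tendsto (fun i => ∫ x, f i x ∂μ) l (𝓝 0) :=
  squeeze_zero (fun i => integral_nonneg_of_ae (hf₀ i))
    (fun i => integral_le_inv_mul_integral_mul hc (hσ i) (hσc i) (hf i) (hf₀ i))
    (by simpa using h.const_mul c⁻¹)

end MeasureTheory

section H1

variable {d : ℕ} {μ : Measure (Euc d)}

def toL2Prod {w : Euc d → ℝ} (hw : MemLp w 2 μ ∧ MemLp (fun x => gradient w x) 2 μ) :
    WithLp 2 (Lp ℝ 2 μ × Lp (Euc d) 2 μ) :=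
  WithLp.toLp 2 (hw.1.toLp w, hw.2.toLp _)

theorem inner_toL2Prod {v w : Euc d → ℝ} (hv : MemLp v 2 μ ∧ MemLp (fun x => gradient v x) 2 μ)
    (hw : MemLp w 2 μ ∧ MemLp (fun x => gradient w x) 2 μ) :
    ⟪toL2Prod hv, toL2Prod hw⟫ = ∫ x, (v x * w x + ⟪gradient v x, gradient w x⟫) ∂μ := by
  rw [toL2Prod, toL2Prod, WithLp.prod_inner_apply, MemLp.inner_toLp_toLp, MemLp.inner_toLp_toLp,
    ← integral_add (hv.1.integrable_inner hw.1) (hv.2.integrable_inner hw.2)]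
  simp only [Real.inner_apply]

theorem norm_toL2Prod_sq {w : Euc d → ℝ} (hw : MemLp w 2 μ ∧ MemLp (fun x => gradient w x) 2 μ) :
    ‖toL2Prod hw‖ ^ 2 = (∫ x, w x ^ 2 ∂μ) + ∫ x, ‖gradient w x‖ ^ 2 ∂μ := by
  rw [toL2Prod, WithLp.prod_norm_sq_eq_of_L2, WithLp.toLp_fst, WithLp.toLp_snd,
    MemLp.norm_toLp_sq, MemLp.norm_toLp_sq]
  simp only [Real.norm_eq_abs, sq_abs]

variable {un : ℕ → Euc d → ℝ} {u : Euc d → ℝ}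

theorem WeakH1Tendsto.exists_norm_toL2Prod_le (hweak : WeakH1Tendsto μ un u)
    (hun : ∀ n, MemLp (un n) 2 μ ∧ MemLp (fun x => gradient (un n) x) 2 μ) :
    ∃ M, ∀ n, ‖toL2Prod (hun n)‖ ≤ M := by
  obtain ⟨C, hC⟩ := hweak.1
  exact ⟨√C, fun n => (le_abs_self _).trans
    (Real.abs_le_sqrt ((norm_toL2Prod_sq _).trans_le (hC n)))⟩

theorem WeakH1Tendsto.tendsto_inner_toL2Prod (hweak : WeakH1Tendsto μ un u)
    (hun : ∀ n, MemLp (un n) 2 μ ∧ MemLp (fun x => gradient (un n) x) 2 μ)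
    (hu : MemLp u 2 μ ∧ MemLp (fun x => gradient u x) 2 μ)
    (h : WithLp 2 (Lp ℝ 2 μ × Lp (Euc d) 2 μ)) :
    Tendsto (fun n => ⟪toL2Prod (hun n), h⟫) atTop (𝓝 ⟪toL2Prod hu, h⟫) := by
  obtain ⟨M, hM⟩ := hweak.exists_norm_toL2Prod_le hun
  let S := Set.range fun w : {w : Euc d → ℝ // MemLp w 2 μ ∧ MemLp (fun x => gradient w x) 2 μ} =>
    toL2Prod w.2
  refine tendsto_inner_of_forall_mem_span (S := S) hM
    (fun n => Submodule.subset_span ⟨⟨_, hun n⟩, rfl⟩) (Submodule.subset_span ⟨⟨u, hu⟩, rfl⟩) ?_ h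
  rintro _ ⟨⟨w, hw⟩, rfl⟩
  simpa only [inner_toL2Prod] using hweak.2 w hw.1 hw.2

theorem WeakH1Tendsto.exists_norm_toLp_gradient_le (hweak : WeakH1Tendsto μ un u)
    (hun : ∀ n, MemLp (un n) 2 μ ∧ MemLp (fun x => gradient (un n) x) 2 μ) :
    ∃ M, ∀ n, ‖(hun n).2.toLp (fun x => gradient (un n) x)‖ ≤ M := by
  obtain ⟨M, hM⟩ := hweak.exists_norm_toL2Prod_le hun
  exact ⟨M, fun n => (WithLp.norm_snd_le _ (toL2Prod (hun n))).trans (hM n)⟩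

theorem WeakH1Tendsto.tendsto_inner_toLp_gradient (hweak : WeakH1Tendsto μ un u)
    (hun : ∀ n, MemLp (un n) 2 μ ∧ MemLp (fun x => gradient (un n) x) 2 μ)
    (hu : MemLp u 2 μ ∧ MemLp (fun x => gradient u x) 2 μ) (Y : Lp (Euc d) 2 μ) :
    Tendsto (fun n => ⟪(hun n).2.toLp (fun x => gradient (un n) x), Y⟫) atTop
      (𝓝 ⟪hu.2.toLp (fun x => gradient u x), Y⟫) := by
  simpa [toL2Prod, WithLp.prod_inner_apply] using
    hweak.tendsto_inner_toL2Prod hun hu (WithLp.toLp 2 (0, Y))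

end H1

theorem weak_plus_energy_implies_strong_gradient_general
    {d : ℕ}
    (μ : Measure (Euc d))
    (lam : ℝ) (hlam : lam ∈ Set.Ioo (0:ℝ) 1)
    (σn : ℕ → Euc d → ℝ) (σs : Euc d → ℝ)
    (hmeas : ∀ n, AEStronglyMeasurable (σn n) μ) (hmeasσ : AEStronglyMeasurable σs μ)
    (hbdn : ∀ n, ∀ᵐ x ∂μ, lam ≤ σn n x ∧ σn n x ≤ lam⁻¹)
    (hbds : ∀ᵐ x ∂μ, lam ≤ σs x ∧ σs x ≤ lam⁻¹)
    (hae : ∀ᵐ x ∂μ, Tendsto (fun n => σn n x) atTop (nhds (σs x)))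
    (un : ℕ → Euc d → ℝ) (u : Euc d → ℝ)
    (hun : ∀ n, MemLp (un n) 2 μ ∧ MemLp (fun x => gradient (un n) x) 2 μ)
    (hu : MemLp u 2 μ ∧ MemLp (fun x => gradient u x) 2 μ)
    (hweak : WeakH1Tendsto μ un u)
    (henergy : Tendsto (fun n => ∫ x, σn n x * ⟪gradient (un n) x, gradient (un n) x⟫ ∂μ)
      atTop (nhds (∫ x, σs x * ⟪gradient u x, gradient u x⟫ ∂μ))) :
    Tendsto (fun n => ∫ x, ‖gradient (un n) x - gradient u x‖ ^ 2 ∂μ) atTop (nhds 0) := by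
  have hnorm : ∀ t : ℝ, lam ≤ t ∧ t ≤ lam⁻¹ → ‖t‖ ≤ lam⁻¹ := fun t ht => by
    rw [Real.norm_eq_abs, abs_le]
    constructor <;> linarith [ht.1, ht.2, hlam.1, inv_pos.2 hlam.1]
  have hσnb : ∀ n, ∀ᵐ x ∂μ, ‖σn n x‖ ≤ lam⁻¹ := fun n => (hbdn n).mono fun x => hnorm _
  have hσn : ∀ n, MemLp (σn n) ∞ μ := fun n => memLp_top_of_bound (hmeas n) _ (hσnb n)
  have hσs : MemLp σs ∞ μ := memLp_top_of_bound hmeasσ _ (hbds.mono fun x => hnorm _)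
  set G₀ := hu.2.toLp (fun x => gradient u x)
  set Y : ℕ → Lp (Euc d) 2 μ := fun n =>
    (hu.2.smul (r := 2) (hσn n)).toLp (σn n • fun x => gradient u x)
  set Y₀ := (hu.2.smul (r := 2) hσs).toLp (σs • fun x => gradient u x)
  have hY : Tendsto Y atTop (𝓝 Y₀) := tendsto_toLp_smul hσn hσs hu.2 hσnb hae
  obtain ⟨M, hM⟩ := hweak.exists_norm_toLp_gradient_le hun
  have hcross := tendsto_inner_of_weak_of_tendsto hM (hweak.tendsto_inner_toLp_gradient hun hu) hY
  have hlast : Tendsto (fun n => ⟪G₀, Y n⟫) atTop (𝓝 ⟪G₀, Y₀⟫) :=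
    tendsto_const_nhds.inner hY
  have hG₀Y₀ : ⟪G₀, Y₀⟫ = ∫ x, σs x * ⟪gradient u x, gradient u x⟫ ∂μ := by
    simp only [G₀, Y₀, MemLp.inner_toLp_toLp, Pi.smul_apply', real_inner_smul_right]
  have hweighted : Tendsto (fun n => ∫ x, σn n x * ‖gradient (un n) x - gradient u x‖ ^ 2 ∂μ)
      atTop (𝓝 0) := by
    have h := (henergy.sub (hcross.const_mul 2)).add hlast
    rw [hG₀Y₀, show ∀ L : ℝ, L - 2 * L + L = 0 by intro L; ring] at h
    exact h.congr fun n => (integral_mul_norm_sub_sq (hσn n) (hun n).2 hu.2).symm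
  exact tendsto_integral_of_tendsto_integral_mul hlam.1 hσn (fun n => (hbdn n).mono fun _ h => h.1)
    (fun n => ((hun n).2.sub hu.2).integrable_norm_pow two_ne_zero)
    (fun n => ae_of_all _ fun _ => by positivity) hweighted

/-- If `σₙ → σ*` a.e. with `λ ≤ σₙ, σ* ≤ λ⁻¹` a.e.,
`uₙ ⇀ u` weakly in `H¹(Ω)` and `(σₙ∇uₙ, ∇uₙ) → (σ*∇u, ∇u)`, then
`∇uₙ → ∇u` strongly in `L²(Ω)`. -/
theorem weak_plus_energy_implies_strong_gradient
    {d : ℕ}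
    (Ω : Set (Euc d)) (hΩo : IsOpen Ω) (hΩb : Bornology.IsBounded Ω)
    (μ : Measure (Euc d)) (hμ : μ = volume.restrict Ω)
    (lam : ℝ) (hlam : lam ∈ Set.Ioo (0:ℝ) 1)
    (σn : ℕ → Euc d → ℝ) (σs : Euc d → ℝ)
    (hmeas : ∀ n, AEStronglyMeasurable (σn n) μ) (hmeasσ : AEStronglyMeasurable σs μ)
    (hbdn : ∀ n, ∀ᵐ x ∂μ, lam ≤ σn n x ∧ σn n x ≤ lam⁻¹)
    (hbds : ∀ᵐ x ∂μ, lam ≤ σs x ∧ σs x ≤ lam⁻¹)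
    (hae : ∀ᵐ x ∂μ, Tendsto (fun n => σn n x) atTop (nhds (σs x)))
    (un : ℕ → Euc d → ℝ) (u : Euc d → ℝ)
    (hun : ∀ n, MemLp (un n) 2 μ ∧ MemLp (fun x => gradient (un n) x) 2 μ)
    (hu : MemLp u 2 μ ∧ MemLp (fun x => gradient u x) 2 μ)
    (hweak : WeakH1Tendsto μ un u)
    (henergy : Tendsto (fun n => ∫ x, σn n x * ⟪gradient (un n) x, gradient (un n) x⟫ ∂μ)
      atTop (nhds (∫ x, σs x * ⟪gradient u x, gradient u x⟫ ∂μ))) :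
    Tendsto (fun n => ∫ x, ‖gradient (un n) x - gradient u x‖ ^ 2 ∂μ) atTop (nhds 0) :=
  weak_plus_energy_implies_strong_gradient_general μ lam hlam σn σs hmeas hmeasσ hbdn hbds hae un u
    hun hu hweak henergy
end
end
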